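/- Fix an integer d ≥ 1, T > 0, and let Q be a d×d real matrix with Q_{ij} > 0 for all i ≠ j and Σ_{j=1}^d Q_{ij} = 0 for every i. Let ν ∈ 𝕄_T^{++} with kernel K_ν. Then there exists a function u* : [0,T] × {1,…,d} → ℝ such that: s ↦ u*(s,i) is infinitely differentiable on [0,T] for every i; inf_{s∈[0,T], 1≤i≤d} u*(s,i) > 0; and for every s ∈ [0,T], the vector (u*(s,1), …, u*(s,d)) attains the infimum inf_{u∈U} Σ_{i=1}^d ((Qu)_i / u_i) · K_ν(s,i). -/

import Mathlib

open Finset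

namespace SmoothOpt

variable {d : ℕ}

noncomputable def pr (k : Fin d) : (Fin d → ℝ) →L[ℝ] ℝ :=
  ContinuousLinearMap.proj k

noncomputable def sumCLM (d : ℕ) : (Fin d → ℝ) →L[ℝ] ℝ := ∑ i, pr i

noncomputable def dotCLM (w : Fin d → ℝ) : (Fin d → ℝ) →L[ℝ] ℝ := ∑ k, w k • pr k

@[simp] lemma pr_apply (k : Fin d) (v : Fin d → ℝ) : pr k v = v k := rfl

@[simp] lemma sumCLM_apply (v : Fin d → ℝ) : sumCLM d v = ∑ i, v i := by
  simp [sumCLM]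

@[simp] lemma dotCLM_apply (w v : Fin d → ℝ) : dotCLM w v = ∑ k, w k * v k := by
  simp [dotCLM]

variable (Q : Matrix (Fin d) (Fin d) ℝ)

noncomputable def S (μ x : Fin d → ℝ) : ℝ := ∑ i, ∑ j, μ i * Q i j * Real.exp (x j - x i)

noncomputable def F (μ x : Fin d → ℝ) : ℝ := S Q μ x + (∑ i, x i) ^ 2

noncomputable def g (μ x : Fin d → ℝ) : Fin d → ℝ := fun k =>
  (∑ i, μ i * Q i k * Real.exp (x k - x i))
    - (∑ j, μ k * Q k j * Real.exp (x j - x k)) + 2 * (∑ i, x i)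

lemma hasFDerivAt_exp_sub (i j : Fin d) (x : Fin d → ℝ) :
    HasFDerivAt (fun x : Fin d → ℝ => Real.exp (x j - x i))
      (Real.exp (x j - x i) • (pr j - pr i)) x :=
  ((hasFDerivAt_apply j x).sub (hasFDerivAt_apply i x)).exp

lemma hasFDerivAt_sum (x : Fin d → ℝ) :
    HasFDerivAt (fun x : Fin d → ℝ => ∑ i, x i) (sumCLM d) x := by
  have : (fun x : Fin d → ℝ => ∑ i, x i) = ⇑(sumCLM d) := by ext v; simp
  rw [this]; exact (sumCLM d).hasFDerivAt

lemma dot_aux (c : Fin d → Fin d → ℝ) (x v : Fin d → ℝ) :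
    (∑ i, ∑ j, c i j * (v j - v i)) + 2 * (∑ i, x i) * (∑ i, v i)
      = ∑ k, ((∑ i, c i k) - (∑ j, c k j) + 2 * (∑ i, x i)) * v k := by
  simp only [mul_sub, sub_mul, add_mul, Finset.sum_sub_distrib, Finset.sum_add_distrib,
    Finset.sum_mul, Finset.mul_sum]
  rw [Finset.sum_comm (f := fun i j => c i j * v j)]

lemma hasFDerivAt_F (μ x : Fin d → ℝ) :
    HasFDerivAt (F Q μ) (dotCLM (g Q μ x)) x := by
  have h1 : HasFDerivAt (F Q μ)
      ((∑ i, ∑ j, (μ i * Q i j) • (Real.exp (x j - x i) • (pr j - pr i)))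
        + ((2 * (∑ i, x i) ^ 1) • sumCLM d)) x := by
    apply HasFDerivAt.add
    · exact HasFDerivAt.fun_sum fun i _ => HasFDerivAt.fun_sum fun j _ =>
        (hasFDerivAt_exp_sub i j x).const_smul (μ i * Q i j)
    · exact (hasDerivAt_pow 2 (∑ i, x i)).comp_hasFDerivAt x (hasFDerivAt_sum x)
  have heq : ((∑ i, ∑ j, (μ i * Q i j) • (Real.exp (x j - x i) • (pr j - pr i)))
        + ((2 * (∑ i, x i) ^ 1) • sumCLM d)) = dotCLM (g Q μ x) := by
    ext v
    simp only [ContinuousLinearMap.add_apply, ContinuousLinearMap.coe_sum', Finset.sum_apply,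
      ContinuousLinearMap.coe_smul', Pi.smul_apply, ContinuousLinearMap.sub_apply, pr_apply,
      sumCLM_apply, dotCLM_apply, smul_eq_mul, g, pow_one]
    simp only [← mul_assoc]
    exact dot_aux (fun i j => μ i * Q i j * Real.exp (x j - x i)) x v
  rw [heq] at h1; exact h1

noncomputable def H (μ x : Fin d → ℝ) : (Fin d → ℝ) →L[ℝ] (Fin d → ℝ) :=
  ContinuousLinearMap.pi fun k =>
    (∑ i, (μ i * Q i k * Real.exp (x k - x i)) • (pr k - pr i))
      - (∑ j, (μ k * Q k j * Real.exp (x j - x k)) • (pr j - pr k)) + (2:ℝ) • sumCLM d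

lemma H_apply (μ x v : Fin d → ℝ) (k : Fin d) :
    H Q μ x v k = (∑ i, μ i * Q i k * Real.exp (x k - x i) * (v k - v i))
      - (∑ j, μ k * Q k j * Real.exp (x j - x k) * (v j - v k)) + 2 * ∑ i, v i := by
  simp [H, ContinuousLinearMap.pi_apply, mul_sub]

lemma hasFDerivAt_g (μ x : Fin d → ℝ) :
    HasFDerivAt (g Q μ) (H Q μ x) x := by
  rw [hasFDerivAt_pi']
  intro k
  rw [show (ContinuousLinearMap.proj k).comp (H Q μ x)
      = (∑ i, (μ i * Q i k * Real.exp (x k - x i)) • (pr k - pr i))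
        - (∑ j, (μ k * Q k j * Real.exp (x j - x k)) • (pr j - pr k)) + (2:ℝ) • sumCLM d from by
    ext v; simp [H, ContinuousLinearMap.pi_apply]]
  apply HasFDerivAt.add
  · apply HasFDerivAt.sub
    · exact HasFDerivAt.fun_sum fun i _ =>
        ((hasFDerivAt_exp_sub i k x).const_smul (μ i * Q i k)).congr_fderiv (by
          rw [smul_smul])
    · exact HasFDerivAt.fun_sum fun j _ =>
        ((hasFDerivAt_exp_sub k j x).const_smul (μ k * Q k j)).congr_fderiv (by
          rw [smul_smul])
  · exact ((hasFDerivAt_sum x).const_smul (2:ℝ)).congr_of_eventuallyEq (by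
      filter_upwards with y; simp [smul_eq_mul])

lemma quad_aux (a : Fin d → Fin d → ℝ) (v : Fin d → ℝ) :
    (∑ i, ∑ k, a i k * (v k - v i) * v k) - (∑ i, ∑ k, a i k * (v k - v i) * v i)
        + (∑ k, (2 * ∑ i, v i) * v k)
      = (∑ i, ∑ k, a i k * (v k - v i) ^ 2) + 2 * (∑ i, v i) ^ 2 := by
  rw [← Finset.sum_sub_distrib]
  congr 1
  · refine Finset.sum_congr rfl fun i _ => ?_
    rw [← Finset.sum_sub_distrib]
    exact Finset.sum_congr rfl fun k _ => by ring
  · rw [← Finset.mul_sum]; ring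

lemma quad_eq (μ x v : Fin d → ℝ) :
    ∑ k, H Q μ x v k * v k
      = (∑ i, ∑ k, μ i * Q i k * Real.exp (x k - x i) * (v k - v i) ^ 2)
        + 2 * (∑ i, v i) ^ 2 := by
  simp only [H_apply, sub_mul, add_mul, Finset.sum_sub_distrib, Finset.sum_add_distrib,
    Finset.sum_mul]
  rw [Finset.sum_comm (f := fun k i => μ i * Q i k * Real.exp (x k - x i) * (v k - v i) * v k)]
  exact quad_aux (fun i k => μ i * Q i k * Real.exp (x k - x i)) v
lemma quad_nonneg {μ : Fin d → ℝ} (hμ : ∀ i, 0 ≤ μ i)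
    (hQ : ∀ i j, i ≠ j → 0 < Q i j) (x v : Fin d → ℝ) :
    0 ≤ ∑ k, H Q μ x v k * v k := by
  rw [quad_eq]
  apply add_nonneg
  · refine Finset.sum_nonneg fun i _ => Finset.sum_nonneg fun k _ => ?_
    rcases eq_or_ne i k with rfl | hik
    · simp
    · have := (hQ i k hik).le
      have := hμ i
      positivity
  · positivity

lemma quad_pos {μ : Fin d → ℝ} (hμ : ∀ i, 0 < μ i)
    (hQ : ∀ i j, i ≠ j → 0 < Q i j) (x : Fin d → ℝ) {v : Fin d → ℝ} (hv : v ≠ 0) :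
    0 < ∑ k, H Q μ x v k * v k := by
  rcases Nat.eq_zero_or_pos d with hd0 | hd0
  · exact absurd (funext fun i => absurd i.2 (by omega)) hv
  rcases lt_or_eq_of_le (quad_nonneg Q (fun i => (hμ i).le) hQ x v) with h | h
  · exact h
  exfalso
  rw [quad_eq] at h
  have hterm : ∀ i k : Fin d, 0 ≤ μ i * Q i k * Real.exp (x k - x i) * (v k - v i) ^ 2 := by
    intro i k
    rcases eq_or_ne i k with rfl | hik
    · simp
    · have := (hQ i k hik).le; have := (hμ i).le; positivity
  have hsum : (0:ℝ) ≤ ∑ i, ∑ k, μ i * Q i k * Real.exp (x k - x i) * (v k - v i) ^ 2 :=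
    Finset.sum_nonneg fun i _ => Finset.sum_nonneg fun k _ => hterm i k
  have h1 : (∑ i, ∑ k, μ i * Q i k * Real.exp (x k - x i) * (v k - v i) ^ 2) = 0 := by
    nlinarith [sq_nonneg (∑ i, v i)]
  have h2 : (∑ i, v i) = 0 := by nlinarith [sq_nonneg (∑ i, v i)]
  have hconst : ∀ k, v k = v ⟨0, hd0⟩ := by
    intro k
    set i : Fin d := ⟨0, hd0⟩
    rcases eq_or_ne i k with rfl | hik
    · rfl
    have hin : (∑ k, μ i * Q i k * Real.exp (x k - x i) * (v k - v i) ^ 2) = 0 :=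
      (Finset.sum_eq_zero_iff_of_nonneg
        (fun i' _ => Finset.sum_nonneg fun k _ => hterm i' k)).1 h1 i (mem_univ i)
    have ht : μ i * Q i k * Real.exp (x k - x i) * (v k - v i) ^ 2 = 0 :=
      (Finset.sum_eq_zero_iff_of_nonneg (fun k _ => hterm i k)).1 hin k (mem_univ k)
    have hc : 0 < μ i * Q i k * Real.exp (x k - x i) :=
      mul_pos (mul_pos (hμ i) (hQ i k hik)) (Real.exp_pos _)
    have : (v k - v i) ^ 2 = 0 := by
      rcases mul_eq_zero.1 ht with h' | h'
      · exact absurd h' hc.ne'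
      · exact h'
    have := pow_eq_zero_iff (n := 2) (by norm_num) |>.1 this
    linarith [sub_eq_zero.1 this]
  apply hv
  have hv0 : v ⟨0, hd0⟩ = 0 := by
    have : (∑ i, v i) = (d : ℝ) * v ⟨0, hd0⟩ := by
      rw [Finset.sum_congr rfl fun i _ => hconst i]
      simp [Finset.card_univ, mul_comm]
    rw [h2] at this
    have hd' : (d:ℝ) ≠ 0 := Nat.cast_ne_zero.2 (by omega)
    exact (mul_eq_zero.1 this.symm).resolve_left hd'
  funext k
  rw [hconst k, hv0]; rfl
lemma hasDerivAt_line_aux (x v : Fin d → ℝ) (t : ℝ) :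
    HasDerivAt (fun t : ℝ => x + t • v) v t := by
  simpa using ((hasDerivAt_id t).smul_const v).const_add x

lemma hasDerivAt_line1 (μ x v : Fin d → ℝ) (t : ℝ) :
    HasDerivAt (fun t => F Q μ (x + t • v)) (∑ k, g Q μ (x + t • v) k * v k) t := by
  have h := (hasFDerivAt_F Q μ (x + t • v)).comp_hasDerivAt t (hasDerivAt_line_aux x v t)
  simp at h; exact h

lemma hasDerivAt_line2 (μ x v : Fin d → ℝ) (t : ℝ) :
    HasDerivAt (fun t => ∑ k, g Q μ (x + t • v) k * v k)
      (∑ k, H Q μ (x + t • v) v k * v k) t := by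
  have hg := (hasFDerivAt_g Q μ (x + t • v)).comp_hasDerivAt t (hasDerivAt_line_aux x v t)
  refine HasDerivAt.fun_sum fun k _ => ?_
  have hk := (hasFDerivAt_apply (𝕜 := ℝ) k (g Q μ (x + t • v))).comp_hasDerivAt t hg
  simpa using hk.mul_const (v k)

lemma psi_monotone {μ : Fin d → ℝ} (hμ : ∀ i, 0 ≤ μ i)
    (hQ : ∀ i j, i ≠ j → 0 < Q i j) (x v : Fin d → ℝ) :
    Monotone (fun t : ℝ => ∑ k, g Q μ (x + t • v) k * v k) := by
  refine monotone_of_deriv_nonneg (fun t => (hasDerivAt_line2 Q μ x v t).differentiableAt)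
    fun t => ?_
  rw [(hasDerivAt_line2 Q μ x v t).deriv]
  exact quad_nonneg Q hμ hQ _ v

lemma crit_isMin {μ : Fin d → ℝ} (hμ : ∀ i, 0 ≤ μ i)
    (hQ : ∀ i j, i ≠ j → 0 < Q i j) {x : Fin d → ℝ} (hx : g Q μ x = 0) (y : Fin d → ℝ) :
    F Q μ x ≤ F Q μ y := by
  set v : Fin d → ℝ := y - x with hv
  have hx1 : x + (1:ℝ) • v = y := by simp [hv]
  have hx0 : x + (0:ℝ) • v = x := by simp
  obtain ⟨c, hc, hceq⟩ := exists_hasDerivAt_eq_slope (fun t => F Q μ (x + t • v))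
    (fun t => ∑ k, g Q μ (x + t • v) k * v k) one_pos
    ((Differentiable.continuous fun t => (hasDerivAt_line1 Q μ x v t).differentiableAt).continuousOn)
    (fun t _ => hasDerivAt_line1 Q μ x v t)
  have hψ0 : (∑ k, g Q μ (x + (0:ℝ) • v) k * v k) = 0 := by
    rw [hx0, hx]; simp
  have hmono := psi_monotone Q hμ hQ x v
  have h0c : (0:ℝ) ≤ ∑ k, g Q μ (x + c • v) k * v k := by
    rw [← hψ0]; exact hmono hc.1.le
  rw [hx1, hx0] at hceq
  rw [hceq] at h0c
  have : 0 ≤ F Q μ y - F Q μ x := by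
    have h10 : (1:ℝ) - 0 = 1 := by norm_num
    rw [h10, div_one] at h0c
    linarith
  linarith
lemma crit_unique {μ : Fin d → ℝ} (hμ : ∀ i, 0 < μ i)
    (hQ : ∀ i j, i ≠ j → 0 < Q i j) {x y : Fin d → ℝ}
    (hx : g Q μ x = 0) (hy : g Q μ y = 0) : x = y := by
  by_contra hne
  set v : Fin d → ℝ := y - x with hv
  have hvne : v ≠ 0 := sub_ne_zero.2 (Ne.symm hne)
  have hx1 : x + (1:ℝ) • v = y := by simp [hv]
  have hx0 : x + (0:ℝ) • v = x := by simp
  set ψ : ℝ → ℝ := fun t => ∑ k, g Q μ (x + t • v) k * v k with hψ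
  have hψ0 : ψ 0 = 0 := by simp only [hψ, hx0, hx]; simp
  have hψ1 : ψ 1 = 0 := by simp only [hψ, hx1, hy]; simp
  have hmono := psi_monotone Q (fun i => (hμ i).le) hQ x v
  have hzero : ∀ t ∈ Set.Ioo (0:ℝ) 1, ψ t = 0 := fun t ht =>
    le_antisymm (hψ1 ▸ hmono ht.2.le) (hψ0 ▸ hmono ht.1.le)
  have hev : ψ =ᶠ[nhds (1/2 : ℝ)] fun _ => 0 := by
    filter_upwards [Ioo_mem_nhds (by norm_num : (0:ℝ) < 1/2) (by norm_num : (1/2:ℝ) < 1)]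
      with t ht using hzero t ht
  have hd0 : deriv ψ (1/2) = 0 := by
    rw [hev.deriv_eq]; simp
  have hdpos : 0 < deriv ψ (1/2) := by
    rw [(hasDerivAt_line2 Q μ x v (1/2)).deriv]
    exact quad_pos Q hμ hQ _ hvne
  exact absurd hd0 hdpos.ne'
lemma contDiff_F : ContDiff ℝ (⊤ : ℕ∞) (fun p : (Fin d → ℝ) × (Fin d → ℝ) => F Q p.1 p.2) := by
  unfold F S
  apply ContDiff.add
  · apply ContDiff.sum; intro i _
    apply ContDiff.sum; intro j _
    exact (((contDiff_apply ℝ ℝ i).comp contDiff_fst).mul contDiff_const).mul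
      (Real.contDiff_exp.comp (((contDiff_apply ℝ ℝ j).comp contDiff_snd).sub
        ((contDiff_apply ℝ ℝ i).comp contDiff_snd)))
  · exact (ContDiff.sum fun i _ => (contDiff_apply ℝ ℝ i).comp contDiff_snd).pow 2

lemma contDiff_g : ContDiff ℝ (⊤ : ℕ∞) (fun p : (Fin d → ℝ) × (Fin d → ℝ) => g Q p.1 p.2) := by
  rw [contDiff_pi]
  intro k
  unfold g
  apply ContDiff.add
  · apply ContDiff.sub
    · apply ContDiff.sum; intro i _
      exact (((contDiff_apply ℝ ℝ i).comp contDiff_fst).mul contDiff_const).mul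
        (Real.contDiff_exp.comp (((contDiff_apply ℝ ℝ k).comp contDiff_snd).sub
          ((contDiff_apply ℝ ℝ i).comp contDiff_snd)))
    · apply ContDiff.sum; intro j _
      exact (((contDiff_apply ℝ ℝ k).comp contDiff_fst).mul contDiff_const).mul
        (Real.contDiff_exp.comp (((contDiff_apply ℝ ℝ j).comp contDiff_snd).sub
          ((contDiff_apply ℝ ℝ k).comp contDiff_snd)))
  · exact contDiff_const.mul (ContDiff.sum fun i _ => (contDiff_apply ℝ ℝ i).comp contDiff_snd)

lemma continuous_F (μ : Fin d → ℝ) : Continuous (F Q μ) := by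
  have : ContDiff ℝ (⊤ : ℕ∞) (fun x : Fin d → ℝ => F Q μ x) :=
    (contDiff_F Q).comp (contDiff_const.prodMk contDiff_id)
  exact this.continuous

lemma S_split (μ x : Fin d → ℝ) :
    S Q μ x = (∑ p ∈ Finset.univ.offDiag, μ p.1 * Q p.1 p.2 * Real.exp (x p.2 - x p.1))
      + ∑ i, μ i * Q i i := by
  unfold S
  rw [← Finset.sum_product', ← Finset.diag_union_offDiag,
    Finset.sum_union (Finset.disjoint_diag_offDiag _), Finset.sum_diag]
  simp [add_comm]

lemma exists_cm {μ : Fin d → ℝ} (hμ : ∀ i, 0 < μ i)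
    (hQ : ∀ i j : Fin d, i ≠ j → 0 < Q i j) :
    ∃ c : ℝ, 0 < c ∧ ∀ i j : Fin d, i ≠ j → c ≤ μ i * Q i j := by
  rcases ((Finset.univ : Finset (Fin d)).offDiag).eq_empty_or_nonempty with he | hne
  · exact ⟨1, one_pos, fun i j hij =>
      absurd (show (i, j) ∈ (Finset.univ : Finset (Fin d)).offDiag from
        Finset.mem_offDiag.2 ⟨mem_univ _, mem_univ _, hij⟩) (by simp [he])⟩
  · refine ⟨((Finset.univ : Finset (Fin d)).offDiag).inf' hne (fun p => μ p.1 * Q p.1 p.2),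
      ?_, ?_⟩
    · rw [Finset.lt_inf'_iff]
      rintro ⟨i, j⟩ hp
      exact mul_pos (hμ i) (hQ i j (Finset.mem_offDiag.1 hp).2.2)
    · intro i j hij
      exact Finset.inf'_le _ (show (i, j) ∈ (Finset.univ : Finset (Fin d)).offDiag from
        Finset.mem_offDiag.2 ⟨mem_univ _, mem_univ _, hij⟩)
lemma F_lower_offdiag {μ : Fin d → ℝ} (hμ : ∀ i, 0 < μ i)
    (hQ : ∀ i j : Fin d, i ≠ j → 0 < Q i j) (x : Fin d → ℝ) {i0 j0 : Fin d} (hne : i0 ≠ j0) :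
    μ i0 * Q i0 j0 * Real.exp (x j0 - x i0) + (∑ i, μ i * Q i i) + (∑ i, x i) ^ 2
      ≤ F Q μ x := by
  unfold F
  rw [S_split]
  have hterm : ∀ p ∈ (Finset.univ : Finset (Fin d)).offDiag,
      0 ≤ μ p.1 * Q p.1 p.2 * Real.exp (x p.2 - x p.1) := by
    intro p hp
    have := (hQ p.1 p.2 (Finset.mem_offDiag.1 hp).2.2).le
    have := (hμ p.1).le
    positivity
  have hmem : (i0, j0) ∈ (Finset.univ : Finset (Fin d)).offDiag :=
    Finset.mem_offDiag.2 ⟨mem_univ _, mem_univ _, hne⟩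
  have h : μ i0 * Q i0 j0 * Real.exp (x j0 - x i0) ≤ ∑ p ∈ (Finset.univ : Finset (Fin d)).offDiag,
      μ p.1 * Q p.1 p.2 * Real.exp (x p.2 - x p.1) := by
    simpa using Finset.single_le_sum hterm hmem
  linarith

lemma F_lower_pen {μ : Fin d → ℝ} (hμ : ∀ i, 0 < μ i)
    (hQ : ∀ i j : Fin d, i ≠ j → 0 < Q i j) (x : Fin d → ℝ) :
    (∑ i, μ i * Q i i) + (∑ i, x i) ^ 2 ≤ F Q μ x := by
  unfold F
  rw [S_split]
  have : (0:ℝ) ≤ ∑ p ∈ (Finset.univ : Finset (Fin d)).offDiag,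
      μ p.1 * Q p.1 p.2 * Real.exp (x p.2 - x p.1) := by
    refine Finset.sum_nonneg fun p hp => ?_
    have := (hQ p.1 p.2 (Finset.mem_offDiag.1 hp).2.2).le
    have := (hμ p.1).le
    positivity
  nlinarith

lemma exists_min (hd : 0 < d) {μ : Fin d → ℝ} (hμ : ∀ i, 0 < μ i)
    (hQ : ∀ i j : Fin d, i ≠ j → 0 < Q i j) :
    ∃ x : Fin d → ℝ, ∀ y, F Q μ x ≤ F Q μ y := by
  obtain ⟨cm, hcm, hcmle⟩ := exists_cm Q hμ hQ
  set C1 : ℝ := ∑ i, μ i * Q i i with hC1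
  set B : ℝ := |F Q μ 0| + |C1| + 1 with hB
  have hB1 : 1 ≤ B := by
    have := abs_nonneg (F Q μ 0); have := abs_nonneg C1; simp only [hB]; linarith
  set R : ℝ := max (2 * B / cm) (max (2 * B) 2) with hR
  have hR2 : 2 ≤ R := le_trans (le_max_right _ _) (le_max_right _ _)
  have hR0 : 0 < R := by linarith
  have hRB : 2 * B ≤ R := le_trans (le_max_left _ _) (le_max_right _ _)
  have hRBc : 2 * B / cm ≤ R := le_max_left _ _
  have hcmR : B ≤ cm * (R / 2) := by
    rw [div_le_iff₀ hcm] at hRBc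
    nlinarith
  -- the key coercivity claim
  have key : ∀ y : Fin d → ℝ, R < ‖y‖ → F Q μ 0 < F Q μ y := by
    intro y hy
    -- pick a coordinate with |y k| > R
    have hk : ∃ k, R < |y k| := by
      by_contra h'
      push_neg at h'
      have : ‖y‖ ≤ R := by
        apply pi_norm_le_iff_of_nonneg hR0.le |>.2
        intro i; rw [Real.norm_eq_abs]; exact h' i
      linarith
    obtain ⟨k, hk⟩ := hk
    -- min and max coordinates
    obtain ⟨i0, _, hi0⟩ := Finset.exists_min_image Finset.univ y ⟨k, mem_univ k⟩
    obtain ⟨j0, _, hj0⟩ := Finset.exists_max_image Finset.univ y ⟨k, mem_univ k⟩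
    have hmm : ∀ i, y i0 ≤ y i ∧ y i ≤ y j0 := fun i => ⟨hi0 i (mem_univ i), hj0 i (mem_univ i)⟩
    have habs : |(d:ℝ) * y k - ∑ i, y i| ≤ (d:ℝ) * (y j0 - y i0) := by
      have he : (d:ℝ) * y k - ∑ i, y i = ∑ i, (y k - y i) := by
        rw [Finset.sum_sub_distrib, Finset.sum_const, Finset.card_univ, Fintype.card_fin,
          nsmul_eq_mul]
      rw [he]
      calc |∑ i, (y k - y i)| ≤ ∑ i, |y k - y i| := Finset.abs_sum_le_sum_abs _ _
        _ ≤ ∑ _i : Fin d, (y j0 - y i0) := by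
            refine Finset.sum_le_sum fun i _ => abs_le.2 ⟨?_, ?_⟩
            · have := (hmm k).1; have := (hmm i).2; linarith
            · have := (hmm k).2; have := (hmm i).1; linarith
        _ = (d:ℝ) * (y j0 - y i0) := by
            rw [Finset.sum_const, Finset.card_univ, Fintype.card_fin, nsmul_eq_mul]
    have hd1 : (1:ℝ) ≤ (d:ℝ) := by exact_mod_cast hd
    have hcase : R / 2 < y j0 - y i0 ∨ R / 2 < |∑ i, y i| := by
      by_contra h'
      push_neg at h'
      have h1 : (d:ℝ) * |y k| ≤ (d:ℝ) * (y j0 - y i0) + |∑ i, y i| := by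
        calc (d:ℝ) * |y k| = |(d:ℝ) * y k| := by
              rw [abs_mul, abs_of_nonneg (by linarith : (0:ℝ) ≤ (d:ℝ))]
          _ = |((d:ℝ) * y k - ∑ i, y i) + ∑ i, y i| := by ring_nf
          _ ≤ |(d:ℝ) * y k - ∑ i, y i| + |∑ i, y i| := abs_add_le _ _
          _ ≤ (d:ℝ) * (y j0 - y i0) + |∑ i, y i| := by linarith
      have hdk : (d:ℝ) * R < (d:ℝ) * |y k| := by nlinarith
      have hsp : (d:ℝ) * (y j0 - y i0) ≤ (d:ℝ) * (R / 2) := by nlinarith [h'.1]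
      have h6 : R / 2 ≤ (d:ℝ) * (R / 2) := by nlinarith
      linarith [h'.2]
    rcases hcase with hcase | hcase
    · -- spread case
      have hne : i0 ≠ j0 := by
        rintro rfl; linarith
      have h1 := F_lower_offdiag Q hμ hQ y hne
      have h2 : cm * (y j0 - y i0) ≤ μ i0 * Q i0 j0 * Real.exp (y j0 - y i0) := by
        have hexp : y j0 - y i0 ≤ Real.exp (y j0 - y i0) := by
          have := Real.add_one_le_exp (y j0 - y i0); linarith
        have h3 := hcmle i0 j0 hne
        nlinarith [Real.exp_pos (y j0 - y i0)]
      have h4 : B < cm * (y j0 - y i0) :=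
        lt_of_le_of_lt hcmR (mul_lt_mul_of_pos_left hcase hcm)
      have h5 : F Q μ 0 < B + C1 := by
        have := le_abs_self (F Q μ 0)
        have := neg_abs_le C1
        simp only [hB]; linarith
      linarith [h1, h2, h4, h5, sq_nonneg (∑ i, y i)]
    · -- sum case
      have h1 := F_lower_pen Q hμ hQ y
      have h2 : (R / 2) ^ 2 < (∑ i, y i) ^ 2 := by
        have := pow_lt_pow_left₀ hcase (by linarith : (0:ℝ) ≤ R / 2) (n := 2) (by norm_num)
        calc (R/2)^2 < |∑ i, y i| ^ 2 := this
          _ = (∑ i, y i) ^ 2 := sq_abs _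
      have h3 : B ≤ (R / 2) ^ 2 := by nlinarith [hRB, hR2, hB1]
      have h5 : F Q μ 0 < B + C1 := by
        have := le_abs_self (F Q μ 0)
        have := neg_abs_le C1
        simp only [hB]; linarith
      linarith [h1, h2, h3, h5]
  obtain ⟨x0, hx0ball, hx0min⟩ := (isCompact_closedBall (0 : Fin d → ℝ) R).exists_isMinOn
    ⟨0, Metric.mem_closedBall_self hR0.le⟩ (continuous_F Q μ).continuousOn
  refine ⟨x0, fun y => ?_⟩
  by_cases hy : y ∈ Metric.closedBall (0 : Fin d → ℝ) R
  · exact hx0min hy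
  · have hy' : R < ‖y‖ := by
      simp only [Metric.mem_closedBall, dist_zero_right, not_le] at hy
      exact hy
    calc F Q μ x0 ≤ F Q μ 0 := hx0min (Metric.mem_closedBall_self hR0.le)
      _ ≤ F Q μ y := (key y hy').le
open scoped Classical in
noncomputable def Xsel (μ : Fin d → ℝ) : Fin d → ℝ :=
  if h : ∃ x : Fin d → ℝ, ∀ y, F Q μ x ≤ F Q μ y then h.choose else 0

lemma Xsel_isMin (hd : 0 < d) {μ : Fin d → ℝ} (hμ : ∀ i, 0 < μ i)
    (hQ : ∀ i j : Fin d, i ≠ j → 0 < Q i j) :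
    ∀ y, F Q μ (Xsel Q μ) ≤ F Q μ y := by
  have h := exists_min Q hd hμ hQ
  rw [Xsel, dif_pos h]
  exact h.choose_spec

lemma dot_single (w : Fin d → ℝ) (k : Fin d) : dotCLM w (Pi.single k 1) = w k := by
  rw [dotCLM_apply]
  simp [Pi.single_apply]

lemma Xsel_crit (hd : 0 < d) {μ : Fin d → ℝ} (hμ : ∀ i, 0 < μ i)
    (hQ : ∀ i j : Fin d, i ≠ j → 0 < Q i j) :
    g Q μ (Xsel Q μ) = 0 := by
  have hmin := Xsel_isMin Q hd hμ hQ
  have hloc : IsLocalMin (F Q μ) (Xsel Q μ) := Filter.Eventually.of_forall hmin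
  have h0 := hloc.hasFDerivAt_eq_zero (hasFDerivAt_F Q μ (Xsel Q μ))
  funext k
  have hk := congrArg (fun L : (Fin d → ℝ) →L[ℝ] ℝ => L (Pi.single k 1)) h0
  simpa only [dot_single, ContinuousLinearMap.zero_apply, Pi.zero_apply] using hk

lemma isOpen_O : IsOpen {μ : Fin d → ℝ | ∀ i, 0 < μ i} := by
  have : {μ : Fin d → ℝ | ∀ i, 0 < μ i} = Set.pi Set.univ (fun _ => Set.Ioi (0:ℝ)) := by
    ext μ; simp [Set.mem_pi]
  rw [this]
  exact isOpen_set_pi Set.finite_univ fun i _ => isOpen_Ioi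

lemma Xsel_contDiffAt (hd : 0 < d) (hQ : ∀ i j : Fin d, i ≠ j → 0 < Q i j)
    {μ₀ : Fin d → ℝ} (hμ₀ : ∀ i, 0 < μ₀ i) : ContDiffAt ℝ (⊤ : ℕ∞) (Xsel Q) μ₀ := by
  classical
  set Ψ : (Fin d → ℝ) × (Fin d → ℝ) → (Fin d → ℝ) × (Fin d → ℝ) :=
    fun q => (q.1, g Q q.1 q.2) with hΨdef
  have hΨ : ContDiff ℝ (⊤ : ℕ∞) Ψ := contDiff_fst.prodMk (contDiff_g Q)
  set p : (Fin d → ℝ) × (Fin d → ℝ) := (μ₀, Xsel Q μ₀) with hp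
  have hdiff : DifferentiableAt ℝ Ψ p :=
    (hΨ.differentiable (by simp)).differentiableAt
  set D := fderiv ℝ Ψ p with hDdef
  have hDf : HasFDerivAt Ψ D p := hdiff.hasFDerivAt
  have hfst : ∀ v : (Fin d → ℝ) × (Fin d → ℝ), (D v).1 = v.1 := by
    intro v
    have h1 := (ContinuousLinearMap.fst ℝ (Fin d → ℝ) (Fin d → ℝ)).hasFDerivAt.comp p hDf
    have h2 : HasFDerivAt (⇑(ContinuousLinearMap.fst ℝ (Fin d → ℝ) (Fin d → ℝ)) ∘ Ψ)
        (ContinuousLinearMap.fst ℝ (Fin d → ℝ) (Fin d → ℝ)) p :=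
      (ContinuousLinearMap.fst ℝ (Fin d → ℝ) (Fin d → ℝ)).hasFDerivAt
    have h3 := h1.unique h2
    calc (D v).1 = ((ContinuousLinearMap.fst ℝ _ _).comp D) v := rfl
      _ = (ContinuousLinearMap.fst ℝ _ _) v := by rw [h3]
      _ = v.1 := rfl
  have hpart : ∀ w : Fin d → ℝ, D (0, w) = (0, H Q μ₀ (Xsel Q μ₀) w) := by
    intro w
    have hι : HasFDerivAt (fun x : Fin d → ℝ => ((μ₀, x) : (Fin d → ℝ) × (Fin d → ℝ)))
        ((0 : (Fin d → ℝ) →L[ℝ] (Fin d → ℝ)).prod (ContinuousLinearMap.id ℝ _)) (Xsel Q μ₀) :=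
      HasFDerivAt.prodMk (hasFDerivAt_const μ₀ _) (hasFDerivAt_id _)
    have h3 := hDf.comp (Xsel Q μ₀) hι
    have h4 : HasFDerivAt (fun x : Fin d → ℝ => Ψ (μ₀, x))
        ((0 : (Fin d → ℝ) →L[ℝ] (Fin d → ℝ)).prod (H Q μ₀ (Xsel Q μ₀))) (Xsel Q μ₀) :=
      HasFDerivAt.prodMk (hasFDerivAt_const μ₀ _) (hasFDerivAt_g Q μ₀ (Xsel Q μ₀))
    have h5 := h3.unique h4
    calc D (0, w) = (D.comp ((0 : (Fin d → ℝ) →L[ℝ] (Fin d → ℝ)).prod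
          (ContinuousLinearMap.id ℝ _))) w := rfl
      _ = ((0 : (Fin d → ℝ) →L[ℝ] (Fin d → ℝ)).prod (H Q μ₀ (Xsel Q μ₀))) w := by rw [h5]
      _ = (0, H Q μ₀ (Xsel Q μ₀) w) := rfl
  have hker : ∀ v : (Fin d → ℝ) × (Fin d → ℝ), D v = 0 → v = 0 := by
    intro v hv
    have hv1 : v.1 = 0 := by rw [← hfst v, hv]; rfl
    have hveq : v = ((0 : Fin d → ℝ), v.2) := by rw [← hv1]
    have hH : H Q μ₀ (Xsel Q μ₀) v.2 = 0 := by
      have := hpart v.2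
      rw [← hveq, hv] at this
      exact (congrArg Prod.snd this).symm
    by_contra hne
    have hv2 : v.2 ≠ 0 := by
      intro h2
      exact hne (by rw [hveq, h2]; rfl)
    have := quad_pos Q hμ₀ hQ (Xsel Q μ₀) hv2
    rw [hH] at this
    simp at this
  have hinj : Function.Injective D := by
    intro a b hab
    have := hker (a - b) (by rw [map_sub, hab, sub_self])
    exact sub_eq_zero.1 this
  have hbijL : Function.Bijective D.toLinearMap :=
    ⟨hinj, LinearMap.injective_iff_surjective.1 hinj⟩
  set eL := (LinearEquiv.ofBijective D.toLinearMap hbijL).toContinuousLinearEquiv with heLdef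
  have heL : (eL : ((Fin d → ℝ) × (Fin d → ℝ)) →L[ℝ] ((Fin d → ℝ) × (Fin d → ℝ))) = D := by
    exact ContinuousLinearMap.ext fun v => rfl
  have hDf' : HasFDerivAt Ψ
      (eL : ((Fin d → ℝ) × (Fin d → ℝ)) →L[ℝ] ((Fin d → ℝ) × (Fin d → ℝ))) p := by
    rw [heL]; exact hDf
  have hΨat : ContDiffAt ℝ (⊤ : ℕ∞) Ψ p := hΨ.contDiffAt
  have hinv := hΨat.to_localInverse (f' := eL) hDf' (by simp)
  set Finv := hΨat.localInverse hDf' (by simp) with hFinvdef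
  have hcrit₀ : g Q μ₀ (Xsel Q μ₀) = 0 := Xsel_crit Q hd hμ₀ hQ
  have hΨp : Ψ p = (μ₀, (0 : Fin d → ℝ)) := by
    simp only [hΨdef, hp, hcrit₀]
  have hri : ∀ᶠ y in nhds (Ψ p), Ψ (Finv y) = y :=
    (hΨat.hasStrictFDerivAt' hDf' (by simp)).eventually_right_inverse
  have hμev : ∀ᶠ μ in nhds μ₀, ∀ i, 0 < μ i :=
    Filter.eventually_of_mem (isOpen_O.mem_nhds hμ₀) fun μ hμ => hμ
  have htend : Filter.Tendsto (fun μ : Fin d → ℝ => ((μ, (0 : Fin d → ℝ)))) (nhds μ₀)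
      (nhds (Ψ p)) := by
    rw [hΨp]
    exact (continuous_id.prodMk continuous_const).tendsto μ₀
  have hev2 : ∀ᶠ μ in nhds μ₀, Ψ (Finv (μ, 0)) = (μ, 0) := htend.eventually hri
  have hevEq : (fun μ => (Finv (μ, 0)).2) =ᶠ[nhds μ₀] Xsel Q := by
    filter_upwards [hev2, hμev] with μ h1 h2
    have hfst1 : (Finv (μ, 0)).1 = μ := congrArg Prod.fst h1
    have hsnd1 : g Q (Finv (μ, 0)).1 (Finv (μ, 0)).2 = 0 := congrArg Prod.snd h1
    rw [hfst1] at hsnd1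
    exact crit_unique Q h2 hQ hsnd1 (Xsel_crit Q hd h2 hQ)
  have hcomp : ContDiffAt ℝ (⊤ : ℕ∞) (fun μ : Fin d → ℝ => (Finv (μ, 0)).2) μ₀ := by
    have h1 : ContDiffAt ℝ (⊤ : ℕ∞) (fun μ : Fin d → ℝ => ((μ, (0 : Fin d → ℝ)))) μ₀ :=
      (contDiff_id.prodMk contDiff_const).contDiffAt
    have h2 : ContDiffAt ℝ (⊤ : ℕ∞) Finv (μ₀, (0 : Fin d → ℝ)) := by
      rw [← hΨp]; exact hinv
    exact contDiffAt_snd.comp μ₀ (h2.comp μ₀ h1)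
  exact hcomp.congr_of_eventuallyEq hevEq.symm
lemma sum_ratio (μ u : Fin d → ℝ) (hu : ∀ i, 0 < u i) :
    ∑ i, (Q.mulVec u i / u i) * μ i = S Q μ (fun i => Real.log (u i)) := by
  unfold S
  refine Finset.sum_congr rfl fun i _ => ?_
  have hmv : Q.mulVec u i = ∑ j, Q i j * u j := by
    simp [Matrix.mulVec, dotProduct]
  rw [hmv, Finset.sum_div, Finset.sum_mul]
  refine Finset.sum_congr rfl fun j _ => ?_
  rw [Real.exp_sub, Real.exp_log (hu j), Real.exp_log (hu i)]
  ring

lemma S_shift (μ y : Fin d → ℝ) (c : ℝ) :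
    S Q μ (fun i => y i - c) = S Q μ y := by
  unfold S
  refine Finset.sum_congr rfl fun i _ => Finset.sum_congr rfl fun j _ => ?_
  rw [show (y j - c) - (y i - c) = y j - y i from by ring]

lemma optimality (hd : 0 < d) {μ : Fin d → ℝ} (hμ : ∀ i, 0 < μ i)
    (hQ : ∀ i j : Fin d, i ≠ j → 0 < Q i j) (u : Fin d → ℝ) (hu : ∀ i, 0 < u i) :
    ∑ i, (Q.mulVec (fun i => Real.exp (Xsel Q μ i)) i / Real.exp (Xsel Q μ i)) * μ i
      ≤ ∑ i, (Q.mulVec u i / u i) * μ i := by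
  have hstar : ∑ i, (Q.mulVec (fun i => Real.exp (Xsel Q μ i)) i / Real.exp (Xsel Q μ i)) * μ i
      = S Q μ (Xsel Q μ) := by
    rw [sum_ratio Q μ _ (fun i => Real.exp_pos _)]
    congr 1
    funext i
    rw [Real.log_exp]
  rw [hstar, sum_ratio Q μ u hu]
  set y : Fin d → ℝ := fun i => Real.log (u i) with hy
  set c : ℝ := (∑ i, y i) / d with hc
  have hd' : (d:ℝ) ≠ 0 := Nat.cast_ne_zero.2 (by omega)
  have hsum0 : (∑ i, (y i - c)) = 0 := by
    rw [Finset.sum_sub_distrib, Finset.sum_const, Finset.card_univ, Fintype.card_fin,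
      nsmul_eq_mul, hc, mul_div_cancel₀ _ hd', sub_self]
  calc S Q μ (Xsel Q μ) ≤ F Q μ (Xsel Q μ) := by
        unfold F; nlinarith [sq_nonneg (∑ i, Xsel Q μ i)]
    _ ≤ F Q μ (fun i => y i - c) := Xsel_isMin Q hd hμ hQ _
    _ = S Q μ (fun i => y i - c) + 0 := by unfold F; rw [hsum0]; norm_num
    _ = S Q μ y := by rw [add_zero, S_shift]
end SmoothOpt

open MeasureTheory

/-- A kernel on `[0,T] × {1,…,d}`. -/
def IsMKernel (d : ℕ) (T : ℝ) (K : ℝ → Fin d → ℝ) : Prop :=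
  (∀ i : Fin d, Measurable fun s => K s i) ∧
    ∀ s ∈ Set.Icc (0:ℝ) T, (∀ i : Fin d, 0 ≤ K s i) ∧ ∑ i : Fin d, K s i = 1

/-- For `ν ∈ 𝕄_T^{++}` (given by a strictly positive, infinitely differentiable kernel
`K` on `[0,T]`), there is an optimizer `u*` of
`inf_{u ∈ U} ∑_i ((Qu)_i / u_i) K(s,i)` which is infinitely differentiable on `[0,T]`
in `s` for each `i` and satisfies `inf_{s ∈ [0,T], i} u*(s,i) > 0`. -/
theorem smooth_optimizer_exists (d : ℕ) (hd : 1 ≤ d) (T : ℝ) (hT : 0 < T)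
    (Q : Matrix (Fin d) (Fin d) ℝ)
    (hQpos : ∀ i j : Fin d, i ≠ j → 0 < Q i j)
    (hQrow : ∀ i : Fin d, ∑ j : Fin d, Q i j = 0)
    (K : ℝ → Fin d → ℝ) (hK : IsMKernel d T K)
    (hKpos : ∀ s ∈ Set.Icc (0:ℝ) T, ∀ i : Fin d, 0 < K s i)
    (hKsmooth : ∀ i : Fin d, ContDiffOn ℝ (⊤ : ℕ∞) (fun s => K s i) (Set.Icc (0:ℝ) T)) :
    ∃ ustar : ℝ → Fin d → ℝ,
      (∀ i : Fin d, ContDiffOn ℝ (⊤ : ℕ∞) (fun s => ustar s i) (Set.Icc (0:ℝ) T)) ∧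
      (∃ c : ℝ, 0 < c ∧ ∀ s ∈ Set.Icc (0:ℝ) T, ∀ i : Fin d, c ≤ ustar s i) ∧
      (∀ s ∈ Set.Icc (0:ℝ) T,
        (∀ i : Fin d, 0 < ustar s i) ∧
        ∀ u : Fin d → ℝ, (∀ i : Fin d, 0 < u i) →
          ∑ i : Fin d, (Q.mulVec (ustar s) i / ustar s i) * K s i ≤
            ∑ i : Fin d, (Q.mulVec u i / u i) * K s i) := by
  have hd0 : 0 < d := hd
  have hsmooth : ∀ i : Fin d, ContDiffOn ℝ (⊤ : ℕ∞)
      (fun s => Real.exp (SmoothOpt.Xsel Q (K s) i)) (Set.Icc (0:ℝ) T) := by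
    have hKcd : ContDiffOn ℝ (⊤ : ℕ∞) (fun s => K s) (Set.Icc (0:ℝ) T) := contDiffOn_pi.2 hKsmooth
    have hXcd : ContDiffOn ℝ (⊤ : ℕ∞) (SmoothOpt.Xsel Q) {μ : Fin d → ℝ | ∀ i, 0 < μ i} :=
      fun μ hμ => (SmoothOpt.Xsel_contDiffAt Q hd0 hQpos hμ).contDiffWithinAt
    have hcomp : ContDiffOn ℝ (⊤ : ℕ∞) (fun s => SmoothOpt.Xsel Q (K s)) (Set.Icc (0:ℝ) T) :=
      hXcd.comp hKcd (fun s hs => hKpos s hs)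
    intro i
    exact Real.contDiff_exp.comp_contDiffOn ((contDiff_apply ℝ ℝ i).comp_contDiffOn hcomp)
  refine ⟨fun s i => Real.exp (SmoothOpt.Xsel Q (K s) i), hsmooth, ?_, ?_⟩
  · -- uniform positive lower bound
    have hne : (Set.Icc (0:ℝ) T).Nonempty := Set.nonempty_Icc.2 hT.le
    have hex : ∀ i : Fin d, ∃ m : ℝ, 0 < m ∧ ∀ s ∈ Set.Icc (0:ℝ) T,
        m ≤ Real.exp (SmoothOpt.Xsel Q (K s) i) := by
      intro i
      obtain ⟨s0, hs0, hmin⟩ := isCompact_Icc.exists_isMinOn hne (hsmooth i).continuousOn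
      exact ⟨Real.exp (SmoothOpt.Xsel Q (K s0) i), Real.exp_pos _, fun s hs => hmin hs⟩
    choose m hm0 hmle using hex
    haveI : Nonempty (Fin d) := ⟨⟨0, hd0⟩⟩
    refine ⟨Finset.univ.inf' Finset.univ_nonempty m, ?_, ?_⟩
    · rw [Finset.lt_inf'_iff]
      exact fun i _ => hm0 i
    · intro s hs i
      exact le_trans (Finset.inf'_le m (Finset.mem_univ i)) (hmle i s hs)
  · intro s hs
    refine ⟨fun i => Real.exp_pos _, fun u hu => ?_⟩
    exact SmoothOpt.optimality Q hd0 (hKpos s hs) hQpos u hu
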